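/- A function f : X → ℝ on a Tychonoff space X is of Baire class one (a pointwise limit of a sequence of continuous functions) if and only if f⁻¹(U) is a Zer_σ-set for every open U ⊆ ℝ. -/
import Mathlib


/-- `A` is a zero set: the preimage of `{0}` under a continuous real-valued function. -/
def IsZeroSet {X : Type*} [TopologicalSpace X] (A : Set X) : Prop :=
  ∃ f : X → ℝ, Continuous f ∧ A = f ⁻¹' {0}

/-- `A` is a cozero set: the complement of a zero set. -/
def IsCozeroSet {X : Type*} [TopologicalSpace X] (A : Set X) : Prop :=
  IsZeroSet Aᶜ

/-- `A` is a `Zer_σ`-set: a countable union of zero sets. -/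
def IsZerSigma {X : Type*} [TopologicalSpace X] (A : Set X) : Prop :=
  ∃ Z : ℕ → Set X, (∀ n, IsZeroSet (Z n)) ∧ A = ⋃ n, Z n

/-- `A` is a `Coz_δ`-set: a countable intersection of cozero sets. -/
def IsCozDelta {X : Type*} [TopologicalSpace X] (A : Set X) : Prop :=
  ∃ U : ℕ → Set X, (∀ n, IsCozeroSet (U n)) ∧ A = ⋂ n, U n

/-- `A` is a `CZ`-set: simultaneously a `Zer_σ`-set and a `Coz_δ`-set. -/
def IsCZSet {X : Type*} [TopologicalSpace X] (A : Set X) : Prop :=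
  IsZerSigma A ∧ IsCozDelta A

/-- `X` is a `CZ`-space: every `Zer_σ`-set is a `Coz_δ`-set. -/
def IsCZSpace (X : Type*) [TopologicalSpace X] : Prop :=
  ∀ A : Set X, IsZerSigma A → IsCozDelta A

/-- `A` is an `F_σ`-set: a countable union of closed sets. -/
def IsFSigma {X : Type*} [TopologicalSpace X] (A : Set X) : Prop :=
  ∃ F : ℕ → Set X, (∀ n, IsClosed (F n)) ∧ A = ⋃ n, F n

/-- `f` is of Baire class one: a pointwise limit of a sequence of continuous functions. -/
def IsBaireOne {X : Type*} [TopologicalSpace X] (f : X → ℝ) : Prop :=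
  ∃ g : ℕ → X → ℝ, (∀ n, Continuous (g n)) ∧
    ∀ x, Filter.Tendsto (fun n => g n x) Filter.atTop (nhds (f x))

open Filter Metric Topology
lemma isZeroSet_empty {X : Type*} [TopologicalSpace X] : IsZeroSet (∅ : Set X) := by
  refine ⟨fun _ => 1, continuous_const, ?_⟩
  ext x; simp

lemma isZeroSet_preimage_closedBall {X : Type*} [TopologicalSpace X] {g : X → ℝ}
    (hg : Continuous g) (q r : ℝ) : IsZeroSet (g ⁻¹' Metric.closedBall q r) := by
  refine ⟨fun x => max (|g x - q| - r) 0, by fun_prop, ?_⟩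
  ext x
  simp only [Set.mem_preimage, Metric.mem_closedBall, Real.dist_eq, Set.mem_singleton_iff,
    max_eq_right_iff, sub_nonpos]

lemma isZeroSet_iInter {X : Type*} [TopologicalSpace X] {Z : ℕ → Set X}
    (h : ∀ n, IsZeroSet (Z n)) : IsZeroSet (⋂ n, Z n) := by
  choose φ hφc hφz using h
  have hbd : ∀ n x, ‖min |φ n x| ((1/2:ℝ)^n)‖ ≤ (1/2:ℝ)^n := by
    intro n x
    rw [Real.norm_eq_abs, abs_of_nonneg (le_min (abs_nonneg _) (by positivity))]
    exact min_le_right _ _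
  have hsum : Summable (fun n : ℕ => ((1:ℝ)/2)^n) := summable_geometric_two
  refine ⟨fun x => ∑' n, min |φ n x| ((1/2:ℝ)^n), ?_, ?_⟩
  · exact continuous_tsum (fun n => by fun_prop) hsum hbd
  · ext x
    have hs : Summable (fun n => min |φ n x| ((1/2:ℝ)^n)) :=
      Summable.of_nonneg_of_le (fun n => le_min (abs_nonneg _) (by positivity))
        (fun n => by simpa using hbd n x) hsum
    simp only [Set.mem_iInter, Set.mem_preimage, Set.mem_singleton_iff]
    constructor
    · intro hx
      rw [show (0:ℝ) = ∑' n, (0:ℝ) by simp]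
      congr 1; ext n
      have : x ∈ Z n := hx n
      rw [hφz n] at this
      simp only [Set.mem_preimage, Set.mem_singleton_iff] at this
      simp [this, le_of_lt (pow_pos (by norm_num : (0:ℝ) < 1/2) n)]
    · intro hx n
      rw [hφz n]
      have h1 : min |φ n x| ((1/2:ℝ)^n) ≤ 0 := by
        rw [← hx]
        exact Summable.le_tsum hs n (fun j _ => le_min (abs_nonneg _) (by positivity))
      have h2 : (0:ℝ) ≤ min |φ n x| ((1/2:ℝ)^n) := le_min (abs_nonneg _) (by positivity)
      have h3 : min |φ n x| ((1/2:ℝ)^n) = 0 := le_antisymm h1 h2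
      have : |φ n x| = 0 := by
        rcases min_eq_iff.mp h3 with ⟨h,_⟩|⟨h,_⟩
        · exact h
        · exfalso; exact absurd h (by positivity)
      simp [Set.mem_preimage, abs_eq_zero] at this
      simp [this]

lemma firstMatch {X : Type*} [TopologicalSpace X] (φ : ℕ → X → ℝ)
    (hφc : ∀ j, Continuous (φ j)) (hnn : ∀ j x, 0 ≤ φ j x) (d : ℕ → ℝ)
    (hcov : ∀ x, ∃ j, φ j x = 0) :
    ∃ g : ℕ → X → ℝ, (∀ n, Continuous (g n)) ∧
      ∀ x, ∀ᶠ n in atTop, g n x = d (Nat.find (hcov x)) := by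
  classical
  set p : ℕ → ℕ → X → ℝ := fun n j x => max (1 - (n:ℝ) * φ j x) 0 with hp
  refine ⟨fun n x => ∑ j ∈ Finset.range (n+1),
      d j * (p n j x * ∏ i ∈ Finset.range j, (1 - p n i x)), ?_, ?_⟩
  · intro n
    apply continuous_finset_sum
    intro j _
    have : Continuous (p n j) := by
      simp only [hp]; fun_prop
    have : Continuous fun x => ∏ i ∈ Finset.range j, (1 - p n i x) := by
      apply continuous_finset_prod
      intro i _
      have : Continuous (p n i) := by simp only [hp]; fun_prop
      fun_prop
    fun_prop
  · intro x
    set j₀ := Nat.find (hcov x) with hj₀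
    have hz : φ j₀ x = 0 := Nat.find_spec (hcov x)
    have hpos : ∀ i < j₀, 0 < φ i x := by
      intro i hi
      rcases lt_or_eq_of_le (hnn i x) with h | h
      · exact h
      · exact absurd h.symm (Nat.find_min (hcov x) hi)
    -- eventually: n ≥ j₀ and ∀ i < j₀, 1 ≤ n * φ i x
    have hev : ∀ᶠ n : ℕ in atTop, ∀ i ∈ Finset.range j₀, 1 ≤ (n:ℝ) * φ i x := by
      rw [Filter.eventually_all_finset]
      intro i hi
      have hc := hpos i (Finset.mem_range.mp hi)
      obtain ⟨N, hN⟩ := exists_nat_ge (1 / φ i x)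
      filter_upwards [eventually_ge_atTop N] with n hn
      have : (1:ℝ) / φ i x ≤ n := hN.trans (by exact_mod_cast hn)
      rw [div_le_iff₀ hc] at this
      linarith
    filter_upwards [hev, eventually_ge_atTop j₀] with n hn hnj
    have hp0 : ∀ i < j₀, p n i x = 0 := by
      intro i hi
      have := hn i (Finset.mem_range.mpr hi)
      simp only [hp]
      rw [max_eq_right]; linarith
    have hpj : p n j₀ x = 1 := by simp [hp, hz]
    rw [Finset.sum_eq_single_of_mem j₀ (Finset.mem_range.mpr (Nat.lt_succ_of_le hnj))]
    · rw [hpj, Finset.prod_eq_one]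
      · ring
      · intro i hi
        rw [hp0 i (Finset.mem_range.mp hi)]; ring
    · intro j _ hj
      rcases lt_or_gt_of_ne hj with h | h
      · rw [hp0 j h]; ring
      · rw [Finset.prod_eq_zero (Finset.mem_range.mpr h) (by rw [hpj]; ring)]
        ring

lemma baireApprox {X : Type*} [TopologicalSpace X] {f : X → ℝ}
    (H : ∀ U : Set ℝ, IsOpen U → IsZerSigma (f ⁻¹' U)) {ε : ℝ} (hε : 0 < ε) :
    ∃ (h : X → ℝ) (g : ℕ → X → ℝ), (∀ n, Continuous (g n)) ∧
      (∀ x, ∀ᶠ n in atTop, g n x = h x) ∧ ∀ x, |h x - f x| < ε := by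
  classical
  set q : ℕ → ℚ := fun k => (Denumerable.eqv ℚ).symm k with hq
  have hA : ∀ k : ℕ, IsZerSigma (f ⁻¹' Metric.ball ((q k : ℝ)) ε) :=
    fun k => H _ Metric.isOpen_ball
  choose Z hZzero hZeq using hA
  choose ψ hψc hψz using fun k m => hZzero k m
  set e : ℕ ≃ ℕ × ℕ := (Denumerable.eqv (ℕ × ℕ)).symm with he
  set φ : ℕ → X → ℝ := fun j x => |ψ (e j).1 (e j).2 x| with hφ
  set d : ℕ → ℝ := fun j => ((q (e j).1 : ℝ)) with hd
  have hcov : ∀ x, ∃ j, φ j x = 0 := by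
    intro x
    obtain ⟨r, hr⟩ := exists_rat_near (f x) hε
    set k := (Denumerable.eqv ℚ) r with hk
    have hqk : q k = r := by simp [hq, hk]
    have hxA : x ∈ f ⁻¹' Metric.ball ((q k : ℝ)) ε := by
      simp only [Set.mem_preimage, Metric.mem_ball, Real.dist_eq, hqk]
      exact hr
    rw [hZeq k] at hxA
    obtain ⟨m, hm⟩ := Set.mem_iUnion.mp hxA
    refine ⟨e.symm (k, m), ?_⟩
    have : x ∈ ψ k m ⁻¹' {0} := by rw [← hψz k m]; exact hm
    simp only [Set.mem_preimage, Set.mem_singleton_iff] at this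
    simp [hφ, this]
  obtain ⟨g, hgc, hgev⟩ := firstMatch φ (fun j => by simp only [hφ]; fun_prop)
    (fun j x => abs_nonneg _) d hcov
  refine ⟨fun x => d (Nat.find (hcov x)), g, hgc, hgev, ?_⟩
  intro x
  set j₀ := Nat.find (hcov x) with hj₀
  have hz : φ j₀ x = 0 := Nat.find_spec (hcov x)
  have hxZ : x ∈ Z (e j₀).1 (e j₀).2 := by
    rw [hψz]
    simp only [Set.mem_preimage, Set.mem_singleton_iff]
    simpa [hφ, abs_eq_zero] using hz
  have : x ∈ f ⁻¹' Metric.ball ((q (e j₀).1 : ℝ)) ε := by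
    rw [hZeq]; exact Set.mem_iUnion.mpr ⟨(e j₀).2, hxZ⟩
  simp only [Set.mem_preimage, Metric.mem_ball, Real.dist_eq] at this
  calc |d j₀ - f x| = |f x - (q (e j₀).1 : ℝ)| := by rw [hd, abs_sub_comm]
  _ < ε := this

noncomputable def trunc (c t : ℝ) : ℝ := max (-c) (min c t)

lemma trunc_eq {c t : ℝ} (h : |t| ≤ c) : trunc c t = t := by
  rw [abs_le] at h
  rw [trunc, min_eq_right h.2, max_eq_right h.1]

lemma abs_trunc_le {c t : ℝ} (hc : 0 ≤ c) : |trunc c t| ≤ c := by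
  rw [abs_le, trunc]
  constructor
  · exact le_max_left _ _
  · exact max_le (by linarith) (min_le_left _ _)

lemma geom_tail_le (N m : ℕ) : ∑ n ∈ Finset.Ico (N+1) (m+1), ((1:ℝ)/2)^n ≤ (1/2:ℝ)^N := by
  rw [Finset.sum_Ico_eq_sum_range]
  have : ∀ k, ((1:ℝ)/2)^(N+1+k) = (1/2:ℝ)^(N+1) * (1/2:ℝ)^k := fun k => pow_add _ _ _
  simp_rw [this, ← Finset.mul_sum]
  calc (1/2:ℝ)^(N+1) * ∑ k ∈ Finset.range (m+1-(N+1)), (1/2:ℝ)^k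
      ≤ (1/2:ℝ)^(N+1) * 2 := by
        apply mul_le_mul_of_nonneg_left (sum_geometric_two_le _) (by positivity)
  _ = (1/2:ℝ)^N := by rw [pow_succ]; ring

lemma backward {X : Type*} [TopologicalSpace X] {f : X → ℝ}
    (H : ∀ n : ℕ, ∃ (h : X → ℝ) (g : ℕ → X → ℝ), (∀ m, Continuous (g m)) ∧
      (∀ x, ∀ᶠ m in atTop, g m x = h x) ∧ ∀ x, |h x - f x| < (1/2:ℝ)^n) :
    IsBaireOne f := by
  classical
  choose h g hgc hgev hacc using H
  set c : ℕ → ℝ := fun n => 3 * (1/2:ℝ)^n with hc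
  set u : ℕ → X → ℝ := fun n x => match n with
    | 0 => h 0 x
    | (k+1) => h (k+1) x - h k x with hu
  set G : ℕ → ℕ → X → ℝ := fun n m x => match n with
    | 0 => g 0 m x
    | (k+1) => trunc (c (k+1)) (g (k+1) m x - g k m x) with hG
  -- sum of u telescopes
  have hsum_u : ∀ m x, ∑ n ∈ Finset.range (m+1), u n x = h m x := by
    intro m x
    induction m with
    | zero => simp [hu]
    | succ k ih => rw [Finset.sum_range_succ, ih]; simp [hu]
  have hubd : ∀ n x, |u (n+1) x| ≤ c (n+1) := by
    intro n x
    have h1 := hacc (n+1) x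
    have h2 := hacc n x
    have : (1/2:ℝ)^n = 2 * (1/2:ℝ)^(n+1) := by rw [pow_succ]; ring
    rw [this] at h2
    simp only [hu, hc]
    calc |h (n+1) x - h n x| ≤ |h (n+1) x - f x| + |f x - h n x| := abs_sub_le _ _ _
    _ ≤ |h (n+1) x - f x| + |h n x - f x| := by rw [abs_sub_comm (f x)]
    _ ≤ (1/2:ℝ)^(n+1) + 2 * (1/2:ℝ)^(n+1) := by linarith
    _ = 3 * (1/2:ℝ)^(n+1) := by ring
  have hGev : ∀ n x, ∀ᶠ m in atTop, G n m x = u n x := by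
    intro n x
    match n with
    | 0 => exact hgev 0 x
    | (k+1) =>
      filter_upwards [hgev (k+1) x, hgev k x] with m h1 h2
      simp only [hG, h1, h2]
      exact trunc_eq (hubd k x)
  have hGbd : ∀ n m x, |G (n+1) m x - u (n+1) x| ≤ 2 * c (n+1) := by
    intro n m x
    have h1 : |G (n+1) m x| ≤ c (n+1) := abs_trunc_le (by positivity)
    have h2 := hubd n x
    calc |G (n+1) m x - u (n+1) x| ≤ |G (n+1) m x| + |u (n+1) x| := abs_sub _ _
    _ ≤ 2 * c (n+1) := by linarith
  refine ⟨fun m x => ∑ n ∈ Finset.range (m+1), G n m x, ?_, ?_⟩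
  · intro m
    apply continuous_finset_sum
    intro n _
    match n with
    | 0 => exact hgc 0 m
    | (k+1) =>
      have h1 := hgc (k+1) m
      have h2 := hgc k m
      simp only [hG, trunc]
      fun_prop
  · intro x
    rw [Metric.tendsto_atTop]
    intro ε hε
    obtain ⟨N, hN⟩ := exists_pow_lt_of_lt_one (show (0:ℝ) < ε/7 by linarith)
      (by norm_num : (1/2:ℝ) < 1)
    have hN7 : 7 * (1/2:ℝ)^N < ε := by
      rw [lt_div_iff₀ (by norm_num : (0:ℝ) < 7)] at hN; linarith
    -- eventually all head terms agree
    have hev : ∀ᶠ m in atTop, ∀ n ∈ Finset.range (N+1), G n m x = u n x :=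
      (Filter.eventually_all_finset _).mpr (fun n _ => hGev n x)
    obtain ⟨M, hM⟩ := (hev.and (eventually_ge_atTop N)).exists_forall_of_atTop
    refine ⟨M, fun m hm => ?_⟩
    obtain ⟨hhead, hmN⟩ := hM m hm
    rw [Real.dist_eq]
    have hbound : ∑ n ∈ Finset.range (m+1), |G n m x - u n x| ≤ 6 * (1/2:ℝ)^N := by
      rw [Finset.range_eq_Ico, ← Finset.sum_Ico_consecutive _ (Nat.zero_le (N+1))
        (by omega : N+1 ≤ m+1)]
      have hhead0 : ∑ n ∈ Finset.Ico 0 (N+1), |G n m x - u n x| = 0 := by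
        apply Finset.sum_eq_zero
        intro n hn
        rw [hhead n (Finset.mem_range.mpr (Finset.mem_Ico.mp hn).2), sub_self, abs_zero]
      rw [hhead0, zero_add]
      calc ∑ n ∈ Finset.Ico (N+1) (m+1), |G n m x - u n x|
          ≤ ∑ n ∈ Finset.Ico (N+1) (m+1), 6 * ((1:ℝ)/2)^n := by
            apply Finset.sum_le_sum
            intro n hn
            obtain ⟨k, rfl⟩ : ∃ k, n = k + 1 := by
              rcases n with _ | k
              · exact absurd (Finset.mem_Ico.mp hn).1 (by omega)
              · exact ⟨k, rfl⟩
            calc |G (k+1) m x - u (k+1) x| ≤ 2 * c (k+1) := hGbd k m x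
            _ = 6 * ((1:ℝ)/2)^(k+1) := by simp only [hc]; ring
      _ = 6 * ∑ n ∈ Finset.Ico (N+1) (m+1), ((1:ℝ)/2)^n := by rw [Finset.mul_sum]
      _ ≤ 6 * (1/2:ℝ)^N :=
            mul_le_mul_of_nonneg_left (geom_tail_le N m) (by norm_num)
    have key : |∑ n ∈ Finset.range (m+1), G n m x - h m x| ≤ 6 * (1/2:ℝ)^N := by
      rw [← hsum_u m x, ← Finset.sum_sub_distrib]
      exact (Finset.abs_sum_le_sum_abs _ _).trans hbound
    have hfm : |h m x - f x| < (1/2:ℝ)^m := hacc m x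
    have hmono : (1/2:ℝ)^m ≤ (1/2:ℝ)^N :=
      pow_le_pow_of_le_one (by norm_num) (by norm_num) hmN
    show |∑ n ∈ Finset.range (m+1), G n m x - f x| < ε
    calc |∑ n ∈ Finset.range (m+1), G n m x - f x|
        ≤ |∑ n ∈ Finset.range (m+1), G n m x - h m x| + |h m x - f x| := abs_sub_le _ _ _
    _ < 6 * (1/2:ℝ)^N + (1/2:ℝ)^N := by linarith
    _ = 7 * (1/2:ℝ)^N := by ring
    _ < ε := hN7

lemma forward {X : Type*} [TopologicalSpace X] {f : X → ℝ} (hf : IsBaireOne f)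
    {U : Set ℝ} (hU : IsOpen U) : IsZerSigma (f ⁻¹' U) := by
  classical
  obtain ⟨g, hgc, hgt⟩ := hf
  set T : ℚ × ℚ × ℕ → Set X := fun p =>
    if Metric.closedBall ((p.1 : ℝ)) (p.2.1 : ℝ) ⊆ U then
      ⋂ k : ℕ, g (k + p.2.2) ⁻¹' Metric.closedBall ((p.1 : ℝ)) (p.2.1 : ℝ)
    else ∅ with hT
  set E : ℕ ≃ ℚ × ℚ × ℕ := (Denumerable.eqv (ℚ × ℚ × ℕ)).symm with hE
  refine ⟨fun n => T (E n), ?_, ?_⟩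
  · intro n
    by_cases hsub : Metric.closedBall (((E n).1 : ℝ)) ((E n).2.1 : ℝ) ⊆ U
    · simp only [hT, if_pos hsub]
      exact isZeroSet_iInter (fun k => isZeroSet_preimage_closedBall (hgc _) _ _)
    · simp only [hT, if_neg hsub]
      exact isZeroSet_empty
  · have hsurj : Function.Surjective E := E.surjective
    rw [hsurj.iUnion_comp T]
    ext x
    simp only [Set.mem_preimage, Set.mem_iUnion]
    constructor
    · intro hx
      obtain ⟨ε, hε, hball⟩ := Metric.isOpen_iff.mp hU (f x) hx
      obtain ⟨q, hq⟩ := exists_rat_near (f x) (by linarith : (0:ℝ) < ε/4)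
      obtain ⟨r, hr1, hr2⟩ := exists_rat_btwn (by linarith : (ε/4 : ℝ) < ε/2)
      have hsub : Metric.closedBall ((q:ℝ)) (r:ℝ) ⊆ U := by
        intro y hy
        apply hball
        rw [Metric.mem_closedBall, Real.dist_eq] at hy
        rw [Metric.mem_ball, Real.dist_eq]
        have : |y - f x| ≤ |y - (q:ℝ)| + |(q:ℝ) - f x| := abs_sub_le _ _ _
        rw [abs_sub_comm ((q:ℝ))] at this
        calc |y - f x| ≤ |y - (q:ℝ)| + |f x - (q:ℝ)| := this
        _ < (r:ℝ) + ε/4 := by linarith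
        _ < ε := by linarith
      have hev : ∀ᶠ n in atTop, |g n x - f x| < (r:ℝ) - ε/4 := by
        have := (hgt x).eventually (Metric.ball_mem_nhds (f x) (by linarith : (0:ℝ) < r - ε/4))
        filter_upwards [this] with n hn
        rwa [Real.dist_eq] at hn
      obtain ⟨N, hN⟩ := hev.exists_forall_of_atTop
      refine ⟨(q, r, N), ?_⟩
      rw [hT]
      simp only [if_pos hsub, Set.mem_iInter]
      intro k
      rw [Set.mem_preimage, Metric.mem_closedBall, Real.dist_eq]
      have h1 := hN (k + N) (by omega)
      calc |g (k + N) x - (q:ℝ)| ≤ |g (k + N) x - f x| + |f x - (q:ℝ)| := abs_sub_le _ _ _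
      _ ≤ ((r:ℝ) - ε/4) + ε/4 := by linarith
      _ = (r:ℝ) := by ring
    · rintro ⟨⟨q, r, N⟩, hx⟩
      rw [hT] at hx
      by_cases hsub : Metric.closedBall ((q:ℝ)) (r:ℝ) ⊆ U
      · simp only [if_pos hsub, Set.mem_iInter] at hx
        apply hsub
        have htend : Tendsto (fun k => g (k + N) x) atTop (𝓝 (f x)) :=
          (hgt x).comp (tendsto_add_atTop_nat N)
        exact Metric.isClosed_closedBall.mem_of_tendsto htend
          (Filter.Eventually.of_forall (fun k => hx k))
      · simp only [if_neg hsub] at hx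
        exact absurd hx (Set.notMem_empty x)

/-- `f : X → ℝ` is Baire-one iff the preimage of every open set is a `Zer_σ`-set. -/
theorem isBaireOne_iff_preimage_open_zerSigma {X : Type*} [TopologicalSpace X] [T35Space X]
    (f : X → ℝ) :
    IsBaireOne f ↔ ∀ U : Set ℝ, IsOpen U → IsZerSigma (f ⁻¹' U) := by
  constructor
  · intro hf U hU
    exact forward hf hU
  · intro H
    apply backward
    intro n
    exact baireApprox H (by positivity)
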